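/- arXiv:2301.08080 — 4 statements merged into one kernel-verified Lean document; each statement's English description precedes it below -/
import Mathlib

section
/- Every nonempty compact metrizable topological space D is a continuous image of the Stone–Čech remainder βℕ \ ℕ; that is, there exists a continuous surjection from βℕ \ ℕ onto D. -/
open Filter Topology

/-- The point of `StoneCech ℕ` corresponding to an ultrafilter. -/
noncomputable def stoneCechMk (F : Ultrafilter ℕ) : StoneCech ℕ :=
  T2Quotient.mk (Quot.mk _ F : PreStoneCech ℕ)

lemma stoneCechExtend_mk {β : Type*} [TopologicalSpace β] [T2Space β] [CompactSpace β]
    {g : ℕ → β} (hg : Continuous g) (F : Ultrafilter ℕ) :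
    stoneCechExtend hg (stoneCechMk F) = Ultrafilter.extend g F := by
  rw [stoneCechExtend, stoneCechMk]
  erw [T2Quotient.lift_mk]
  rfl

lemma stoneCechMk_not_unit {F : Ultrafilter ℕ} (hF : ↑F ≤ (cofinite : Filter ℕ)) :
    stoneCechMk F ∉ Set.range (stoneCechUnit : ℕ → StoneCech ℕ) := by
  rintro ⟨n, hn⟩
  set g : ℕ → Bool := fun m => decide (m = n) with hgdef
  have hg : Continuous g := continuous_of_discreteTopology
  have h1 : stoneCechExtend hg (stoneCechUnit n) = g n :=
    congrFun (stoneCechExtend_extends hg) n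
  have h2 : Ultrafilter.extend g F = g n := by
    rw [← stoneCechExtend_mk hg, ← hn, h1]
  have h3 : Ultrafilter.extend g F = false := by
    rw [ultrafilter_extend_eq_iff]
    have : {m | g m = false} ∈ F := by
      apply hF
      apply Set.Finite.subset (Set.finite_singleton n)
      intro m hm
      simp only [hgdef, Set.mem_setOf_eq, decide_eq_false_iff_not] at hm
      simp only [Set.mem_singleton_iff]
      by_contra h
      exact hm h
    have : ({false} : Set Bool) ∈ (F.map g : Filter Bool) := by
      rw [Ultrafilter.coe_map, mem_map]
      exact this
    intro s hs
    have : ({false} : Set Bool) ⊆ s := by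
      intro b hb
      rw [Set.mem_singleton_iff] at hb
      subst hb
      exact mem_of_mem_nhds hs
    exact mem_of_superset ‹({false} : Set Bool) ∈ (F.map g : Filter Bool)› this
  simp only [hgdef, decide_eq_true_eq] at h2
  rw [h3] at h2
  simp at h2

/-- Every nonempty compact metrizable space is a continuous image of the
Stone–Čech remainder `βℕ \ ℕ`. -/
theorem exists_continuous_surjection_from_stoneCech_remainder_nat
    {D : Type*} [TopologicalSpace D] [CompactSpace D]
    [TopologicalSpace.MetrizableSpace D] [Nonempty D] :
    ∃ f : {x : StoneCech ℕ // x ∉ Set.range (stoneCechUnit : ℕ → StoneCech ℕ)} → D,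
      Continuous f ∧ Function.Surjective f := by
  letI : MetricSpace D := TopologicalSpace.metrizableSpaceMetric D
  -- dense sequence, each value attained infinitely often
  set v : ℕ → D := TopologicalSpace.denseSeq D with hv
  have hvd : DenseRange v := TopologicalSpace.denseRange_denseSeq D
  set u : ℕ → D := fun n => v (Nat.unpair n).1 with hu
  have hcu : Continuous u := continuous_of_discreteTopology
  refine ⟨fun x => stoneCechExtend hcu x.1, (continuous_stoneCechExtend hcu).comp
    continuous_subtype_val, ?_⟩
  intro d
  -- the preimage of any neighborhood of d is infinite
  have key : ∀ U ∈ 𝓝 d, (u ⁻¹' U).Infinite := by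
    intro U hU
    obtain ⟨k, hk⟩ : ∃ k, v k ∈ interior U := by
      have : (interior U).Nonempty := ⟨d, mem_interior_iff_mem_nhds.2 hU⟩
      obtain ⟨y, hy⟩ := this
      obtain ⟨k, hk⟩ := hvd.exists_mem_open isOpen_interior ⟨y, hy⟩
      exact ⟨k, hk⟩
    have hsub : (fun m => Nat.pair k m) '' Set.univ ⊆ u ⁻¹' U := by
      rintro _ ⟨m, -, rfl⟩
      simp only [hu, Set.mem_preimage, Nat.unpair_pair]
      exact interior_subset hk
    refine Set.Infinite.mono hsub ?_
    apply Set.infinite_of_injective_forall_mem (f := fun m => Nat.pair k m)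
    · intro a b hab
      exact (Nat.pair_eq_pair.mp hab).2
    · intro a; exact ⟨a, trivial, rfl⟩
  -- build a free ultrafilter whose u-limit is d
  have hne : (Filter.comap u (𝓝 d) ⊓ cofinite).NeBot := by
    rw [inf_neBot_iff]
    intro s hs t ht
    obtain ⟨U, hU, hUs⟩ := hs
    rw [mem_cofinite] at ht
    have : (u ⁻¹' U ∩ t).Infinite := ((key U hU).diff ht).mono (by
      intro x hx; exact ⟨hx.1, by simpa using hx.2⟩)
    obtain ⟨x, hx⟩ := this.nonempty
    exact ⟨x, hUs hx.1, hx.2⟩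
  set F : Ultrafilter ℕ := Ultrafilter.of (Filter.comap u (𝓝 d) ⊓ cofinite) with hF
  have hFle : ↑F ≤ Filter.comap u (𝓝 d) ⊓ cofinite := Ultrafilter.of_le _
  have hFcof : ↑F ≤ (cofinite : Filter ℕ) := hFle.trans inf_le_right
  have hFlim : (F.map u : Filter D) ≤ 𝓝 d := by
    rw [Ultrafilter.coe_map]
    calc Filter.map u ↑F ≤ Filter.map u (Filter.comap u (𝓝 d)) :=
          Filter.map_mono (hFle.trans inf_le_left)
      _ ≤ 𝓝 d := Filter.map_comap_le
  refine ⟨⟨stoneCechMk F, stoneCechMk_not_unit hFcof⟩, ?_⟩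
  show stoneCechExtend hcu (stoneCechMk F) = d
  rw [stoneCechExtend_mk hcu]
  exact ultrafilter_extend_eq_iff.mpr hFlim
end

section
/- Let G and H be abelian groups, p : G → H a surjective group homomorphism, and (H, H⁺) a partially ordered abelian group with H⁺ ∩ (−H⁺) = {0} which has the strong Riesz interpolation property. Define G⁺ := p⁻¹(H⁺ \ {0}) ∪ {0}. Then (G, G⁺) is a partially ordered abelian group with the strong Riesz interpolation property. -/
/-- The strong Riesz interpolation property for a positive cone `P` in an abelian
group: whenever `x₁, x₂ < y₁, y₂` (where `a < b` means `b - a ∈ P \ {0}`) there is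
`z` with `x_i < z < y_j` for all `i, j`. -/
def StrongRieszInterp {G : Type*} [AddCommGroup G] (P : Set G) : Prop :=
  ∀ x₁ x₂ y₁ y₂ : G,
    y₁ - x₁ ∈ P \ {0} → y₁ - x₂ ∈ P \ {0} → y₂ - x₁ ∈ P \ {0} → y₂ - x₂ ∈ P \ {0} →
      ∃ z : G, z - x₁ ∈ P \ {0} ∧ z - x₂ ∈ P \ {0} ∧
        y₁ - z ∈ P \ {0} ∧ y₂ - z ∈ P \ {0}

/-- Pulling back a cone with strong Riesz interpolation along a surjective group
homomorphism (adding `0` and excluding the preimage of `0`) yields an ordered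
abelian group with strong Riesz interpolation. -/
theorem pullback_cone_strong_riesz_interpolation
    {G H : Type*} [AddCommGroup G] [AddCommGroup H]
    (p : G →+ H) (hp : Function.Surjective p)
    (Hpos : Set H) (h0 : (0 : H) ∈ Hpos)
    (hadd : ∀ a ∈ Hpos, ∀ b ∈ Hpos, a + b ∈ Hpos)
    (hcone : ∀ a : H, a ∈ Hpos → -a ∈ Hpos → a = 0)
    (hinterp : StrongRieszInterp Hpos) :
    (∀ a ∈ (p ⁻¹' (Hpos \ {0}) ∪ {0}), ∀ b ∈ (p ⁻¹' (Hpos \ {0}) ∪ {0}),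
        a + b ∈ (p ⁻¹' (Hpos \ {0}) ∪ {0})) ∧
    (∀ a : G, a ∈ (p ⁻¹' (Hpos \ {0}) ∪ {0}) → -a ∈ (p ⁻¹' (Hpos \ {0}) ∪ {0}) →
        a = 0) ∧
    StrongRieszInterp (p ⁻¹' (Hpos \ {0}) ∪ {0}) := by
  set C : Set G := p ⁻¹' (Hpos \ {0}) ∪ {0} with hC
  -- key characterization of membership in C \ {0}
  have hmem : ∀ g : G, g ∈ C \ {0} ↔ p g ∈ Hpos \ {0} := by
    intro g
    constructor
    · rintro ⟨hg | hg, hne⟩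
      · exact hg
      · exact absurd hg hne
    · intro hg
      refine ⟨Or.inl hg, ?_⟩
      intro h
      simp only [Set.mem_singleton_iff] at h
      subst h
      simp at hg
  refine ⟨?_, ?_, ?_⟩
  · rintro a (ha | ha) b (hb | hb)
    · left
      simp only [Set.mem_preimage, Set.mem_diff, Set.mem_singleton_iff, map_add] at *
      refine ⟨hadd _ ha.1 _ hb.1, ?_⟩
      intro h
      have : -(p a) ∈ Hpos := by
        have : p b = -(p a) := by rw [eq_neg_iff_add_eq_zero, add_comm]; exact h
        rw [← this]; exact hb.1
      exact ha.2 (hcone _ ha.1 this)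
    · simp only [Set.mem_singleton_iff] at hb; subst hb; simpa using (show a ∈ C from Or.inl ha)
    · simp only [Set.mem_singleton_iff] at ha; subst ha; simpa using (show b ∈ C from Or.inl hb)
    · simp_all
  · intro a ha hna
    by_contra hne
    have h1 := (hmem a).mp ⟨ha, hne⟩
    have h2 := (hmem (-a)).mp ⟨hna, by simpa using hne⟩
    simp only [map_neg, Set.mem_diff, Set.mem_singleton_iff] at h1 h2
    exact h1.2 (hcone _ h1.1 h2.1)
  · intro x₁ x₂ y₁ y₂ h11 h12 h21 h22
    have k11 := (hmem _).mp h11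
    have k12 := (hmem _).mp h12
    have k21 := (hmem _).mp h21
    have k22 := (hmem _).mp h22
    simp only [map_sub] at k11 k12 k21 k22
    obtain ⟨w, w1, w2, w3, w4⟩ := hinterp (p x₁) (p x₂) (p y₁) (p y₂) k11 k12 k21 k22
    obtain ⟨z, rfl⟩ := hp w
    exact ⟨z, (hmem _).mpr (by simpa using w1), (hmem _).mpr (by simpa using w2),
      (hmem _).mpr (by simpa using w3), (hmem _).mpr (by simpa using w4)⟩
end

section
/- Let X be a nonempty compact Hausdorff space and C a subgroup of the additive group C_ℝ(X) of real-valued continuous functions on X which is dense in the uniform norm and closed under multiplication by rational scalars. Define C⁺ := { h ∈ C : h(x) ≥ ε for all x ∈ X, for some ε > 0 } ∪ {0}. Then (C, C⁺) is a partially ordered abelian group with the strong Riesz interpolation property. -/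
/-!
On a compact space a continuous function is bounded below by a positive constant exactly when
it is pointwise positive, so the strict order of the cone is the pointwise strict order.
Antisymmetry and additivity of the cone are then immediate. For interpolation, the functions
lying pointwise strictly between `f₁ ⊔ f₂` and `g₁ ⊓ g₂` form a set which is open in the
compact-open topology and nonempty (it contains the midpoint), hence meets the dense subgroup.
-/

open Set

namespace ContinuousMap

variable {X : Type*} [TopologicalSpace X]

theorem exists_pos_le_iff_forall_pos [CompactSpace X] (f : C(X, ℝ)) :
    (∃ ε > (0 : ℝ), ∀ x, ε ≤ f x) ↔ ∀ x, 0 < f x := by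
  refine ⟨fun ⟨ε, hε, hf⟩ x => hε.trans_le (hf x), fun hf => ?_⟩
  obtain ⟨ε, hε, hεf⟩ :=
    isCompact_univ.exists_forall_le' f.continuous.continuousOn fun x _ => hf x
  exact ⟨ε, hε, fun x => hεf x (mem_univ x)⟩

theorem isOpen_setOf_forall_lt_lt [CompactSpace X] (a b : C(X, ℝ)) :
    IsOpen {h : C(X, ℝ) | ∀ x, a x < h x ∧ h x < b x} := by
  have hpos : IsOpen {k : C(X, ℝ) | range k ⊆ Ioi 0} := isOpen_setOfPred_range_subset isOpen_Ioi
  have hlow := hpos.preimage (continuous_id.sub continuous_const : Continuous fun h => h - a)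
  have hupp := hpos.preimage (continuous_const.sub continuous_id : Continuous fun h => b - h)
  convert hlow.inter hupp using 1
  ext h
  simp [range_subset_iff, forall_and]

theorem _root_.Dense.exists_mem_forall_lt_lt [CompactSpace X] {S : Set C(X, ℝ)} (hS : Dense S)
    {a b : C(X, ℝ)} (hab : ∀ x, a x < b x) : ∃ h ∈ S, ∀ x, a x < h x ∧ h x < b x := by
  have hmid (x : X) : a x < ((2⁻¹ : ℝ) • (a + b) : C(X, ℝ)) x ∧
      ((2⁻¹ : ℝ) • (a + b) : C(X, ℝ)) x < b x := by
    constructor <;> simp only [coe_smul, coe_add, Pi.smul_apply, Pi.add_apply, smul_eq_mul] <;>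
      linarith [hab x]
  exact hS.exists_mem_open (isOpen_setOf_forall_lt_lt a b) ⟨_, hmid⟩

end ContinuousMap

open ContinuousMap

theorem dense_subgroup_of_continuous_functions_strong_riesz_general
    {X : Type*} [TopologicalSpace X] [CompactSpace X] [Nonempty X]
    (C : AddSubgroup C(X, ℝ))
    (hdense : Dense (C : Set C(X, ℝ))) :
    (∀ a ∈ {h : C(X, ℝ) | h ∈ C ∧ (h = 0 ∨ ∃ ε > (0 : ℝ), ∀ x : X, ε ≤ h x)},
      ∀ b ∈ {h : C(X, ℝ) | h ∈ C ∧ (h = 0 ∨ ∃ ε > (0 : ℝ), ∀ x : X, ε ≤ h x)},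
        a + b ∈ {h : C(X, ℝ) | h ∈ C ∧ (h = 0 ∨ ∃ ε > (0 : ℝ), ∀ x : X, ε ≤ h x)}) ∧
    (∀ a : C(X, ℝ),
      a ∈ {h : C(X, ℝ) | h ∈ C ∧ (h = 0 ∨ ∃ ε > (0 : ℝ), ∀ x : X, ε ≤ h x)} →
      -a ∈ {h : C(X, ℝ) | h ∈ C ∧ (h = 0 ∨ ∃ ε > (0 : ℝ), ∀ x : X, ε ≤ h x)} →
      a = 0) ∧
    (∀ f₁ ∈ C, ∀ f₂ ∈ C, ∀ g₁ ∈ C, ∀ g₂ ∈ C,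
      (∀ i ∈ ({f₁, f₂} : Set C(X, ℝ)), ∀ j ∈ ({g₁, g₂} : Set C(X, ℝ)),
        ∃ ε > (0 : ℝ), ∀ x : X, ε ≤ (j - i) x) →
      ∃ h ∈ C, (∀ i ∈ ({f₁, f₂} : Set C(X, ℝ)), ∃ ε > (0 : ℝ), ∀ x : X, ε ≤ (h - i) x) ∧
        (∀ j ∈ ({g₁, g₂} : Set C(X, ℝ)), ∃ ε > (0 : ℝ), ∀ x : X, ε ≤ (j - h) x)) := by
  simp only [mem_ofPred_eq, mem_insert_iff, mem_singleton_iff, forall_eq_or_imp, forall_eq,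
    exists_pos_le_iff_forall_pos]
  simp only [coe_add, coe_neg, coe_sub, Pi.add_apply, Pi.neg_apply, Pi.sub_apply, sub_pos,
    neg_pos]
  refine ⟨?_, ?_, ?_⟩
  · rintro a ⟨haC, ha⟩ b ⟨hbC, hb⟩
    refine ⟨C.add_mem haC hbC, ?_⟩
    rcases ha with rfl | ha
    · simpa using hb
    rcases hb with rfl | hb
    · simpa using .inr ha
    exact .inr fun x => add_pos (ha x) (hb x)
  · rintro a ⟨-, ha⟩ ⟨-, hna | hna⟩
    · exact neg_eq_zero.mp hna
    rcases ha with rfl | ha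
    · rfl
    obtain ⟨x⟩ := ‹Nonempty X›
    exact absurd (ha x) (hna x).not_gt
  · rintro f₁ - f₂ - g₁ - g₂ - ⟨⟨hf₁g₁, hf₁g₂⟩, hf₂g₁, hf₂g₂⟩
    have hgap (x : X) : (f₁ ⊔ f₂) x < (g₁ ⊓ g₂) x := by
      simp only [sup_apply, inf_apply, max_lt_iff, lt_min_iff]
      exact ⟨⟨hf₁g₁ x, hf₂g₁ x⟩, hf₁g₂ x, hf₂g₂ x⟩
    obtain ⟨h, hC, hbetween⟩ := hdense.exists_mem_forall_lt_lt hgap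
    simp only [sup_apply, inf_apply, max_lt_iff, lt_min_iff] at hbetween
    exact ⟨h, hC, ⟨fun x => (hbetween x).1.1, fun x => (hbetween x).1.2⟩,
      fun x => (hbetween x).2.1, fun x => (hbetween x).2.2⟩

/-- A uniformly dense subgroup of `C(X, ℝ)` closed under rational scalars, with the
cone of functions bounded below by a positive constant (together with `0`), is a
partially ordered abelian group with the strong Riesz interpolation property. -/
theorem dense_subgroup_of_continuous_functions_strong_riesz
    {X : Type*} [TopologicalSpace X] [CompactSpace X] [T2Space X] [Nonempty X]
    (C : AddSubgroup C(X, ℝ))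
    (hdense : Dense (C : Set C(X, ℝ)))
    (hrat : ∀ (q : ℚ), ∀ f ∈ C, (q : ℝ) • f ∈ C) :
    (∀ a ∈ {h : C(X, ℝ) | h ∈ C ∧ (h = 0 ∨ ∃ ε > (0 : ℝ), ∀ x : X, ε ≤ h x)},
      ∀ b ∈ {h : C(X, ℝ) | h ∈ C ∧ (h = 0 ∨ ∃ ε > (0 : ℝ), ∀ x : X, ε ≤ h x)},
        a + b ∈ {h : C(X, ℝ) | h ∈ C ∧ (h = 0 ∨ ∃ ε > (0 : ℝ), ∀ x : X, ε ≤ h x)}) ∧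
    (∀ a : C(X, ℝ),
      a ∈ {h : C(X, ℝ) | h ∈ C ∧ (h = 0 ∨ ∃ ε > (0 : ℝ), ∀ x : X, ε ≤ h x)} →
      -a ∈ {h : C(X, ℝ) | h ∈ C ∧ (h = 0 ∨ ∃ ε > (0 : ℝ), ∀ x : X, ε ≤ h x)} →
      a = 0) ∧
    (∀ f₁ ∈ C, ∀ f₂ ∈ C, ∀ g₁ ∈ C, ∀ g₂ ∈ C,
      (∀ i ∈ ({f₁, f₂} : Set C(X, ℝ)), ∀ j ∈ ({g₁, g₂} : Set C(X, ℝ)),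
        ∃ ε > (0 : ℝ), ∀ x : X, ε ≤ (j - i) x) →
      ∃ h ∈ C, (∀ i ∈ ({f₁, f₂} : Set C(X, ℝ)), ∃ ε > (0 : ℝ), ∀ x : X, ε ≤ (h - i) x) ∧
        (∀ j ∈ ({g₁, g₂} : Set C(X, ℝ)), ∃ ε > (0 : ℝ), ∀ x : X, ε ≤ (j - h) x)) :=
  dense_subgroup_of_continuous_functions_strong_riesz_general C hdense
end

section
/- Let (G, G⁺) be a partially ordered abelian group with the strong Riesz interpolation property and let φ : G → G be an injective group homomorphism with φ(G⁺) ⊆ G⁺ and such that for every g ∈ G⁺ \ {0} one has φ(g) ∈ G⁺ \ {0}, and with the property that the inductive limit of the stationary system (G, φ) is realized as a group 𝒢 with positive cone 𝒢⁺ = ⋃_N φ_∞,N(G⁺) (where φ_∞,N are the canonical maps into the limit). Then (𝒢, 𝒢⁺) has the strong Riesz interpolation property. -/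
open Filter

namespace StationaryLimit

variable {G H : Type*} [AddCommGroup G] [AddCommGroup H] {φ : G →+ G} {j : ℕ → G →+ H}

theorem map_iterate_sub_of_le (hcompat : ∀ N, j N = (j (N + 1)).comp φ) {L N : ℕ}
    (hLN : L ≤ N) (g : G) : j N (φ^[N - L] g) = j L g := by
  induction N, hLN using Nat.le_induction with
  | base => simp
  | succ N hLN ih =>
    rw [Nat.sub_add_comm hLN, Function.iterate_succ_apply', ← ih, hcompat N]
    rfl

theorem eventually_exists_map_eq (hcompat : ∀ N, j N = (j (N + 1)).comp φ)
    (hsurj : ∀ x : H, ∃ N g, j N g = x) (x : H) : ∀ᶠ K in atTop, ∃ g, j K g = x := by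
  obtain ⟨M, g, rfl⟩ := hsurj x
  filter_upwards [eventually_ge_atTop M] with K hMK
  exact ⟨_, map_iterate_sub_of_le hcompat hMK g⟩

variable {P : Set G}

theorem eventually_mem_of_map_eq (hcompat : ∀ N, j N = (j (N + 1)).comp φ)
    (hjinj : ∀ N, Function.Injective (j N)) (hφP : Set.MapsTo φ P P) {x : H}
    (hx : x ∈ (⋃ N, j N '' P) \ {0}) : ∀ᶠ K in atTop, ∀ g, j K g = x → g ∈ P \ {0} := by
  obtain ⟨hxC, hx0⟩ := hx
  obtain ⟨M, p, hp, rfl⟩ := Set.mem_iUnion.1 hxC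
  filter_upwards [eventually_ge_atTop M] with K hMK g hg
  rw [← map_iterate_sub_of_le hcompat hMK] at hg
  refine ⟨hjinj K hg ▸ hφP.iterate _ hp, ?_⟩
  rintro rfl
  refine hx0 (Set.mem_singleton_iff.2 ?_)
  rw [← map_iterate_sub_of_le hcompat hMK, ← hg, map_zero]

theorem map_mem_iUnion_image_diff {K : ℕ} (hjinj : Function.Injective (j K)) {g : G}
    (hg : g ∈ P \ {0}) : j K g ∈ (⋃ N, j N '' P) \ {0} :=
  ⟨Set.mem_iUnion.2 ⟨K, g, hg.1, rfl⟩,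
    fun h0 => hg.2 (hjinj (h0.trans (map_zero (j K)).symm))⟩

end StationaryLimit

open StationaryLimit in
theorem inductive_limit_strong_riesz_interpolation_general
    {G GInf : Type*} [AddCommGroup G] [AddCommGroup GInf]
    (P : Set G)
    (hinterp : StrongRieszInterp P)
    (φ : G →+ G)
    (hφpos : ∀ g ∈ P, φ g ∈ P)
    (j : ℕ → G →+ GInf)
    (hcompat : ∀ N, j N = (j (N + 1)).comp φ)
    (hjinj : ∀ N, Function.Injective (j N))
    (hsurj : ∀ x : GInf, ∃ N g, j N g = x) :
    StrongRieszInterp (⋃ N, (j N) '' P) := by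
  intro x₁ x₂ y₁ y₂ h₁₁ h₁₂ h₂₁ h₂₂
  have rep := eventually_exists_map_eq hcompat hsurj
  have pos := fun {x} (hx : x ∈ _) => eventually_mem_of_map_eq hcompat hjinj hφpos hx
  obtain ⟨K, ⟨a₁, rfl⟩, ⟨a₂, rfl⟩, ⟨b₁, rfl⟩, ⟨b₂, rfl⟩, p₁₁, p₁₂, p₂₁, p₂₂⟩ :=
    ((rep x₁).and <| (rep x₂).and <| (rep y₁).and <| (rep y₂).and <|
      (pos h₁₁).and <| (pos h₁₂).and <| (pos h₂₁).and (pos h₂₂)).exists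
  obtain ⟨z, hz₁, hz₂, hz₃, hz₄⟩ :=
    hinterp a₁ a₂ b₁ b₂ (p₁₁ _ (map_sub ..)) (p₁₂ _ (map_sub ..)) (p₂₁ _ (map_sub ..))
      (p₂₂ _ (map_sub ..))
  refine ⟨j K z, ?_, ?_, ?_, ?_⟩ <;> rw [← map_sub]
  exacts [map_mem_iUnion_image_diff (hjinj K) hz₁, map_mem_iUnion_image_diff (hjinj K) hz₂,
    map_mem_iUnion_image_diff (hjinj K) hz₃, map_mem_iUnion_image_diff (hjinj K) hz₄]

/-- The inductive limit of a stationary system of ordered abelian groups with the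
strong Riesz interpolation property, along an injective positive map preserving
strict positivity, has the strong Riesz interpolation property. -/
theorem inductive_limit_strong_riesz_interpolation
    {G GInf : Type*} [AddCommGroup G] [AddCommGroup GInf]
    (P : Set G) (h0 : (0 : G) ∈ P)
    (hadd : ∀ a ∈ P, ∀ b ∈ P, a + b ∈ P)
    (hcone : ∀ a : G, a ∈ P → -a ∈ P → a = 0)
    (hinterp : StrongRieszInterp P)
    (φ : G →+ G) (hφinj : Function.Injective φ)
    (hφpos : ∀ g ∈ P, φ g ∈ P)
    (hφstrict : ∀ g ∈ P, g ≠ 0 → φ g ∈ P ∧ φ g ≠ 0)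
    (j : ℕ → G →+ GInf)
    (hcompat : ∀ N, j N = (j (N + 1)).comp φ)
    (hjinj : ∀ N, Function.Injective (j N))
    (hsurj : ∀ x : GInf, ∃ N g, j N g = x) :
    StrongRieszInterp (⋃ N, (j N) '' P) :=
  inductive_limit_strong_riesz_interpolation_general P hinterp φ hφpos j hcompat hjinj hsurj
end
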